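/- Let δ ∈ (0,1) and ε > 0 be constants, and for each n ≥ 2 let (K_n, λ) be a random simple temporal graph on n vertices. Let k_0(n) = 2 ln n / ln(1/δ) and set k_n = ⌈(1+ε)·k_0(n)⌉. Then E[X^{(k_n)}] → 0 as n → ∞. -/

import Mathlib

/-!
First moment method. If the `k(k-1)/2` labels inside a `k`-set are pairwise within `δ`, they all
lie in one of the `⌈1/(δ' - δ)⌉₊ + 1` windows `[q(δ' - δ), q(δ' - δ) + δ']`, so by independence the
set is a `δ`-temporal clique with probability at most `(⌈1/(δ' - δ)⌉₊ + 1) δ'^(k(k-1)/2)`. Summing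
over the `≤ n^k` sets, `E[X^(k)] ≤ C (n δ'^((k-1)/2))^k`. Choosing `δ' ∈ (δ, 1)` with
`(1 + ε) log(1/δ') > log(1/δ)` makes `n δ'^((k_n-1)/2)` a negative power of `n`.
-/

open MeasureTheory ProbabilityTheory

/-- The edge set of the complete graph `K_n` on vertex set `Fin n`:
unordered pairs of distinct vertices. -/
def EdgeKn (n : ℕ) : Type := {e : Sym2 (Fin n) // ¬ e.IsDiag}

/-- `Q` is a `δ`-temporal clique for the labeling `lam` if any two edges with
both endpoints in `Q` carry labels at most `δ` apart. -/
def IsTemporalClique {n : ℕ} (lam : EdgeKn n → ℝ) (δ : ℝ) (Q : Finset (Fin n)) : Prop :=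
  ∀ e e' : EdgeKn n, (∀ v ∈ e.1, v ∈ Q) → (∀ v ∈ e'.1, v ∈ Q) →
    |lam e - lam e'| ≤ δ

open scoped Classical in
/-- The number of `k`-element vertex subsets of `Fin n` that are `δ`-temporal cliques. -/
noncomputable def cliqueCount {n : ℕ} (lam : EdgeKn n → ℝ) (δ : ℝ) (k : ℕ) : ℕ :=
  ((Finset.univ.powersetCard k).filter (fun Q => IsTemporalClique lam δ Q)).card

open Filter Finset
open scoped Topology

section UniformFamily

variable {ι Ω : Type*} [MeasurableSpace Ω] {μ : Measure Ω} {X : ι → Ω → ℝ}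

lemma measure_preimage_eq_volume_inter_Icc {Y : Ω → ℝ} (hY : Measurable Y)
    (hunif : μ.map Y = volume.restrict (Set.Icc 0 1)) {S : Set ℝ} (hS : MeasurableSet S) :
    μ (Y ⁻¹' S) = volume (S ∩ Set.Icc 0 1) := by
  rw [← Measure.map_apply hY hS, hunif, Measure.restrict_apply hS]

lemma measure_biInter_preimage_Icc_le (hindep : iIndepFun X μ) (hX : ∀ i, Measurable (X i))
    (hunif : ∀ i, μ.map (X i) = volume.restrict (Set.Icc 0 1)) (s : Finset ι) (a w : ℝ) :
    μ (⋂ i ∈ s, X i ⁻¹' Set.Icc a (a + w)) ≤ ENNReal.ofReal w ^ #s := by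
  rw [hindep.meas_biInter fun i _ => ⟨_, measurableSet_Icc, rfl⟩]
  refine prod_le_pow_card _ _ _ fun i _ => ?_
  rw [measure_preimage_eq_volume_inter_Icc (hX i) (hunif i) measurableSet_Icc]
  exact (measure_mono Set.inter_subset_left).trans (by simp)

lemma measure_preimage_compl_Icc_eq_zero {Y : Ω → ℝ} (hY : Measurable Y)
    (hunif : μ.map Y = volume.restrict (Set.Icc 0 1)) : μ (Y ⁻¹' (Set.Icc 0 1)ᶜ) = 0 := by
  rw [measure_preimage_eq_volume_inter_Icc hY hunif measurableSet_Icc.compl,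
    Set.compl_inter_self, measure_empty]

lemma measurableSet_forall_abs_sub_le (hX : ∀ i, Measurable (X i)) (s : Finset ι) (δ : ℝ) :
    MeasurableSet {ω | ∀ i ∈ s, ∀ j ∈ s, |X i ω - X j ω| ≤ δ} := by
  simp only [Set.ofPred_forall]
  exact .biInter s.countable_toSet fun i _ => .biInter s.countable_toSet fun j _ =>
    measurableSet_le ((hX i).sub (hX j)).abs measurable_const

lemma exists_window_of_forall_abs_sub_le {s : Finset ι} {f : ι → ℝ} {δ δ' : ℝ} (hδδ' : δ < δ')
    (h01 : ∀ i ∈ s, f i ∈ Set.Icc 0 1) (hclose : ∀ i ∈ s, ∀ j ∈ s, |f i - f j| ≤ δ) :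
    ∃ q ∈ range (⌈1 / (δ' - δ)⌉₊ + 1), ∀ i ∈ s,
      f i ∈ Set.Icc (q * (δ' - δ)) (q * (δ' - δ) + δ') := by
  rcases s.eq_empty_or_nonempty with rfl | hs
  · exact ⟨0, by simp, by simp⟩
  obtain ⟨i₀, hi₀, hmin⟩ := s.exists_min_image f hs
  have hstep : 0 < δ' - δ := sub_pos.2 hδδ'
  obtain ⟨ht0, ht1⟩ := h01 i₀ hi₀
  set q := ⌊f i₀ / (δ' - δ)⌋₊
  refine ⟨q, mem_range.2 (Nat.lt_succ_of_le ?_), fun i hi => ⟨?_, ?_⟩⟩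
  · exact (Nat.floor_mono (div_le_div_of_nonneg_right ht1 hstep.le)).trans (Nat.floor_le_ceil _)
  · exact ((le_div_iff₀ hstep).1 (Nat.floor_le (div_nonneg ht0 hstep.le))).trans (hmin i hi)
  · have hclose_i₀ : f i ≤ f i₀ + δ := by linarith [(abs_le.1 (hclose i hi i₀ hi₀)).2]
    have hfloor : f i₀ < (q + 1) * (δ' - δ) := (div_lt_iff₀ hstep).1 (Nat.lt_floor_add_one _)
    linarith

lemma measure_forall_abs_sub_le_le (hindep : iIndepFun X μ) (hX : ∀ i, Measurable (X i))
    (hunif : ∀ i, μ.map (X i) = volume.restrict (Set.Icc 0 1)) (s : Finset ι) {δ δ' : ℝ}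
    (hδδ' : δ < δ') :
    μ {ω | ∀ i ∈ s, ∀ j ∈ s, |X i ω - X j ω| ≤ δ} ≤
      (⌈1 / (δ' - δ)⌉₊ + 1) * ENNReal.ofReal δ' ^ #s := by
  set windows := ⋃ q ∈ range (⌈1 / (δ' - δ)⌉₊ + 1),
    ⋂ i ∈ s, X i ⁻¹' Set.Icc (q * (δ' - δ)) (q * (δ' - δ) + δ')
  set outside := ⋃ i ∈ s, X i ⁻¹' (Set.Icc 0 1)ᶜ
  have hcover : {ω | ∀ i ∈ s, ∀ j ∈ s, |X i ω - X j ω| ≤ δ} ⊆ windows ∪ outside := by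
    intro ω hω
    by_cases h01 : ∀ i ∈ s, X i ω ∈ Set.Icc 0 1
    · obtain ⟨q, hq, hwindow⟩ := exists_window_of_forall_abs_sub_le hδδ' h01 hω
      exact Or.inl (Set.mem_biUnion hq (Set.mem_iInter₂.2 hwindow))
    · obtain ⟨i, hi, hout⟩ := not_forall₂.1 h01
      exact Or.inr (Set.mem_biUnion hi hout)
  have houtside : μ outside = 0 := (measure_biUnion_null_iff s.countable_toSet).2 fun i _ =>
    measure_preimage_compl_Icc_eq_zero (hX i) (hunif i)
  calc μ {ω | ∀ i ∈ s, ∀ j ∈ s, |X i ω - X j ω| ≤ δ}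
      ≤ μ windows + μ outside := (measure_mono hcover).trans (measure_union_le _ _)
    _ ≤ ∑ q ∈ range (⌈1 / (δ' - δ)⌉₊ + 1), ENNReal.ofReal δ' ^ #s := by
      rw [houtside, add_zero]
      exact (measure_biUnion_finset_le _ _).trans
        (sum_le_sum fun q _ => measure_biInter_preimage_Icc_le hindep hX hunif s _ _)
    _ = _ := by simp

end UniformFamily

lemma integral_card_filter {α Ω : Type*} [MeasurableSpace Ω] (μ : Measure Ω) [IsFiniteMeasure μ]
    (S : Finset α) (p : α → Ω → Prop) [∀ a ω, Decidable (p a ω)]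
    (hp : ∀ a ∈ S, MeasurableSet {ω | p a ω}) :
    ∫ ω, (#{a ∈ S | p a ω} : ℝ) ∂μ = ∑ a ∈ S, μ.real {ω | p a ω} := by
  have hcount : ∀ ω, (#{a ∈ S | p a ω} : ℝ) = ∑ a ∈ S, {ω | p a ω}.indicator 1 ω := by
    intro ω
    simp [Set.indicator_apply]
  simp_rw [hcount]
  rw [integral_finsetSum _ fun a ha => (integrable_const 1).indicator (hp a ha)]
  exact sum_congr rfl fun a ha => integral_indicator_one (hp a ha)

lemma tendsto_natCast_pow_mul_pow_choose_two {r a : ℝ} (hr0 : 0 < r) (hr1 : r < 1)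
    (ha : 2 < a * Real.log r⁻¹) {k : ℕ → ℕ} (hk : ∀ n : ℕ, a * Real.log n ≤ k n) :
    Tendsto (fun n : ℕ => (n : ℝ) ^ k n * r ^ (k n).choose 2) atTop (𝓝 0) := by
  set L := Real.log r⁻¹
  have hL : 0 < L := Real.log_pos ((one_lt_inv₀ hr0).2 hr1)
  have ha0 : 0 < a := pos_of_mul_pos_left (by linarith) hL.le
  have hlog : Tendsto (fun n : ℕ => Real.log n) atTop atTop :=
    Real.tendsto_log_atTop.comp tendsto_natCast_atTop_atTop
  have hexp : ∀ n : ℕ, 0 < n →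
      (n : ℝ) ^ k n * r ^ (k n).choose 2 = Real.exp (k n * Real.log n - (k n).choose 2 * L) := by
    intro n hn
    rw [show L = -Real.log r from Real.log_inv r, mul_neg, sub_neg_eq_add, Real.exp_add,
      Real.exp_nat_mul, Real.exp_nat_mul, Real.exp_log (by exact_mod_cast hn), Real.exp_log hr0]
  have hexponent : ∀ᶠ n : ℕ in atTop,
      k n * Real.log n - (k n).choose 2 * L ≤ -(a * Real.log n) := by
    filter_upwards [(hlog.const_mul_atTop (by linarith : 0 < a * L / 2 - 1)).eventually_ge_atTop
      (L / 2 + 1)] with n hn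
    have hlinear : Real.log n - (k n - 1) * L / 2 ≤ -1 := by
      nlinarith [mul_le_mul_of_nonneg_right (hk n) hL.le]
    have hscaled := mul_le_mul_of_nonneg_left hlinear (Nat.cast_nonneg (k n))
    rw [Nat.cast_choose_two]
    linarith [hk n]
  have hdecay : Tendsto (fun n : ℕ => Real.exp (-(a * Real.log n))) atTop (𝓝 0) :=
    Real.tendsto_exp_atBot.comp (tendsto_neg_atTop_atBot.comp (hlog.const_mul_atTop ha0))
  refine squeeze_zero' (.of_forall fun n => by positivity) ?_ hdecay
  filter_upwards [hexponent, eventually_gt_atTop 0] with n hn hpos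
  rw [hexp n hpos]
  exact Real.exp_le_exp.2 hn

lemma exists_between_log_inv_lt {δ ε : ℝ} (hδ0 : 0 < δ) (hδ1 : δ < 1) (hε : 0 < ε) :
    ∃ δ', δ < δ' ∧ δ' < 1 ∧ Real.log δ⁻¹ < (1 + ε) * Real.log δ'⁻¹ := by
  set c := (1 + ε / 2)⁻¹
  have hc1 : c < 1 := inv_lt_one_of_one_lt₀ (by linarith)
  have hεc : 1 < (1 + ε) * c := by
    rw [← div_eq_mul_inv, one_lt_div (by positivity)]
    linarith
  refine ⟨δ ^ c, ?_, Real.rpow_lt_one hδ0.le hδ1 (by positivity), ?_⟩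
  · simpa using Real.rpow_lt_rpow_of_exponent_gt hδ0 hδ1 hc1
  · rw [Real.log_inv, Real.log_inv, Real.log_rpow hδ0]
    nlinarith [Real.log_neg hδ0 hδ1]

instance (n : ℕ) : Fintype (EdgeKn n) :=
  inferInstanceAs (Fintype {e : Sym2 (Fin n) // ¬ e.IsDiag})

section TemporalClique

variable {n : ℕ}

def edgesIn (Q : Finset (Fin n)) : Finset (EdgeKn n) :=
  {e | ∀ v ∈ e.1, v ∈ Q}

lemma mem_edgesIn {Q : Finset (Fin n)} {e : EdgeKn n} : e ∈ edgesIn Q ↔ ∀ v ∈ e.1, v ∈ Q := by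
  simp [edgesIn]

lemma card_edgesIn (Q : Finset (Fin n)) : #(edgesIn Q) = (#Q).choose 2 := by
  rw [← Sym2.card_image_offDiag]
  refine card_bij (fun e _ => e.1) ?_ (fun e₁ _ e₂ _ => Subtype.ext) ?_
  · rintro ⟨z, hz⟩ he
    induction z using Sym2.inductionOn with
    | hf a b =>
      have hQ := mem_edgesIn.1 he
      exact mem_image.2 ⟨(a, b), mem_offDiag.2 ⟨hQ a (Sym2.mem_mk_left a b),
        hQ b (Sym2.mem_mk_right a b), by simpa using hz⟩, rfl⟩
  · rintro _ hz
    obtain ⟨⟨a, b⟩, hab, rfl⟩ := mem_image.1 hz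
    obtain ⟨ha, hb, hne⟩ := mem_offDiag.1 hab
    refine ⟨⟨s(a, b), by simpa using hne⟩, mem_edgesIn.2 fun v hv => ?_, rfl⟩
    rcases Sym2.mem_iff.1 hv with rfl | rfl
    exacts [ha, hb]

lemma isTemporalClique_iff {lam : EdgeKn n → ℝ} {δ : ℝ} {Q : Finset (Fin n)} :
    IsTemporalClique lam δ Q ↔ ∀ e ∈ edgesIn Q, ∀ e' ∈ edgesIn Q, |lam e - lam e'| ≤ δ := by
  simp only [IsTemporalClique, mem_edgesIn]
  exact ⟨fun h e he e' he' => h e e' he he', fun h e e' he he' => h e he e' he'⟩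

variable {Ω : Type*} [MeasurableSpace Ω] {P : Measure Ω} {lam : EdgeKn n → Ω → ℝ}

lemma measurableSet_isTemporalClique (hmeas : ∀ e, Measurable (lam e)) (δ : ℝ)
    (Q : Finset (Fin n)) : MeasurableSet {ω | IsTemporalClique (fun e => lam e ω) δ Q} := by
  simpa only [isTemporalClique_iff] using measurableSet_forall_abs_sub_le hmeas (edgesIn Q) δ

lemma measureReal_isTemporalClique_le (hmeas : ∀ e, Measurable (lam e)) (hindep : iIndepFun lam P)
    (hunif : ∀ e, P.map (lam e) = volume.restrict (Set.Icc 0 1)) {δ δ' : ℝ} (hδ : 0 ≤ δ)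
    (hδδ' : δ < δ') (Q : Finset (Fin n)) :
    P.real {ω | IsTemporalClique (fun e => lam e ω) δ Q} ≤
      (⌈1 / (δ' - δ)⌉₊ + 1) * δ' ^ (#Q).choose 2 := by
  have hδ' : 0 ≤ δ' := hδ.trans hδδ'.le
  simp only [isTemporalClique_iff, ← card_edgesIn]
  refine ENNReal.toReal_le_of_le_ofReal (by positivity)
    ((measure_forall_abs_sub_le_le hindep hmeas hunif _ hδδ').trans_eq ?_)
  rw [ENNReal.ofReal_mul (by positivity), ENNReal.ofReal_pow hδ']
  norm_cast

lemma integral_cliqueCount_le [IsProbabilityMeasure P] (hmeas : ∀ e, Measurable (lam e))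
    (hindep : iIndepFun lam P) (hunif : ∀ e, P.map (lam e) = volume.restrict (Set.Icc 0 1))
    {δ δ' : ℝ} (hδ : 0 ≤ δ) (hδδ' : δ < δ') (k : ℕ) :
    ∫ ω, (cliqueCount (fun e => lam e ω) δ k : ℝ) ∂P ≤
      (⌈1 / (δ' - δ)⌉₊ + 1) * ((n : ℝ) ^ k * δ' ^ k.choose 2) := by
  classical
  have hδ' : 0 ≤ δ' := hδ.trans hδδ'.le
  simp only [cliqueCount]
  rw [integral_card_filter P _ _ fun Q _ => measurableSet_isTemporalClique hmeas δ Q]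
  calc ∑ Q ∈ univ.powersetCard k, P.real {ω | IsTemporalClique (fun e => lam e ω) δ Q}
      ≤ ∑ _Q ∈ univ.powersetCard k, (⌈1 / (δ' - δ)⌉₊ + 1) * δ' ^ k.choose 2 :=
        sum_le_sum fun Q hQ => (mem_powersetCard_univ.1 hQ) ▸
          measureReal_isTemporalClique_le hmeas hindep hunif hδ hδδ' Q
    _ = (⌈1 / (δ' - δ)⌉₊ + 1) * ((n.choose k : ℝ) * δ' ^ k.choose 2) := by
        simp only [sum_const, card_powersetCard, card_univ, Fintype.card_fin, nsmul_eq_mul]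
        ring
    _ ≤ (⌈1 / (δ' - δ)⌉₊ + 1) * ((n : ℝ) ^ k * δ' ^ k.choose 2) := by
        gcongr
        exact_mod_cast n.choose_le_pow k

end TemporalClique

open Filter in
/-- For constants `δ ∈ (0,1)` and `ε > 0`, with `k₀(n) = 2 ln n / ln(1/δ)`
and `k_n = ⌈(1+ε) k₀(n)⌉`, the expected number of `δ`-temporal cliques of size `k_n`
in the random simple temporal graph `(K_n, λ)` tends to `0` as `n → ∞`. -/
theorem stmt8
    (δ : ℝ) (hδ0 : 0 < δ) (hδ1 : δ < 1) (ε : ℝ) (hε : 0 < ε)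
    {Ω : ℕ → Type*} [∀ n, MeasurableSpace (Ω n)]
    (P : ∀ n, Measure (Ω n)) (hP : ∀ n, IsProbabilityMeasure (P n))
    (lam : ∀ n, EdgeKn n → Ω n → ℝ) (hmeas : ∀ n e, Measurable (lam n e))
    (hindep : ∀ n, iIndepFun (lam n) (P n))
    (hunif : ∀ n e, Measure.map (lam n e) (P n) = (volume : Measure ℝ).restrict (Set.Icc 0 1))
    (kseq : ℕ → ℕ)
    (hk : ∀ n, kseq n = ⌈(1 + ε) * (2 * Real.log n / Real.log (1/δ))⌉₊) :
    Tendsto (fun n => ∫ ω, (cliqueCount (fun e => lam n e ω) δ (kseq n) : ℝ) ∂(P n))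
      atTop (nhds 0) := by
  obtain ⟨δ', hδδ', hδ'1, hlog⟩ := exists_between_log_inv_lt hδ0 hδ1 hε
  simp only [one_div] at hk
  have hL : 0 < Real.log δ⁻¹ := Real.log_pos ((one_lt_inv₀ hδ0).2 hδ1)
  set a := (1 + ε) * 2 / Real.log δ⁻¹
  have ha : 2 < a * Real.log δ'⁻¹ := by
    rw [div_mul_eq_mul_div, lt_div_iff₀ hL]
    linarith
  have hka : ∀ n : ℕ, a * Real.log n ≤ kseq n := fun n =>
    hk n ▸ (le_of_eq (by ring)).trans (Nat.le_ceil _)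
  refine squeeze_zero (fun n => integral_nonneg fun ω => by positivity)
    (fun n => have := hP n
      integral_cliqueCount_le (hmeas n) (hindep n) (hunif n) hδ0.le hδδ' (kseq n)) ?_
  simpa using (tendsto_natCast_pow_mul_pow_choose_two (hδ0.trans hδδ') hδ'1 ha hka).const_mul
    ((⌈1 / (δ' - δ)⌉₊ : ℝ) + 1)
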